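/- Let δ : C → ℝ be a positive function on an open convex cone C in a finite-dimensional real vector space satisfying: (i) δ(λx) = λ⁻¹ δ(x) for all λ > 0 and x ∈ C, and (ii) there exists ε₀ > 0 such that for all ε ∈ (0, ε₀) and all x, y ∈ C with both (1+ε)x − y ∈ C and y − (1−ε)x ∈ C, one has δ(x + εy) ≤ δ(x) ≤ δ(x − εy) whenever x + εy, x − εy ∈ C. Then δ is continuous on C. -/

import Mathlib

/-!
Fix `x ∈ C` and a small `ε`. For `z` near `x` the vectors `y₊ = ε⁻¹ • ((1 + ε) • z - x)` and
`y₋ = ε⁻¹ • (x - (1 - ε) • z)` are close to `x`, hence satisfy the side conditions of the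
comparison principle (at `y = x` they read `x, ε • x, ε • x ∈ C`, and `C` is open). Since
`x + ε • y₊ = (1 + ε) • z` and `x - ε • y₋ = (1 - ε) • z`, comparison and scaling give
`(1 - ε) δ x ≤ δ z ≤ (1 + ε) δ x`.
-/

open Filter Topology Set

theorem continuousAt_of_eventually_abs_sub_le_mul {X : Type*} [TopologicalSpace X]
    {f : X → ℝ} {x : X} {ε₁ : ℝ} (hε₁ : 0 < ε₁)
    (h : ∀ ε ∈ Ioo 0 ε₁, ∀ᶠ z in 𝓝 x, |f z - f x| ≤ ε * |f x|) :
    ContinuousAt f x := by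
  rw [ContinuousAt, Metric.tendsto_nhds]
  intro η hη
  have hsmall : Tendsto (fun ε : ℝ => ε * |f x|) (𝓝[>] 0) (𝓝 0) := by
    simpa using (tendsto_id.mul_const |f x|).mono_left (nhdsWithin_le_nhds (a := (0 : ℝ)))
  obtain ⟨ε, hεη, hε⟩ :=
    ((hsmall.eventually (gt_mem_nhds hη)).and (Ioo_mem_nhdsGT hε₁)).exists
  filter_upwards [h ε hε] with z hz
  rw [Real.dist_eq]
  exact hz.trans_lt hεη

section Cone

variable {V : Type*} [NormedAddCommGroup V] [NormedSpace ℝ V] {C : Set V} {x : V} {ε : ℝ}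

theorem setOf_comparable_mem_nhds (hCopen : IsOpen C)
    (hCsmul : ∀ lam : ℝ, 0 < lam → ∀ x ∈ C, lam • x ∈ C) (hε : 0 < ε) (hx : x ∈ C) :
    {y | y ∈ C ∧ (1 + ε) • x - y ∈ C ∧ y - (1 - ε) • x ∈ C} ∈ 𝓝 x := by
  have hεx : ε • x ∈ C := hCsmul ε hε x hx
  refine (hCopen.inter ((hCopen.preimage (by fun_prop)).inter
    (hCopen.preimage (by fun_prop)))).mem_nhds ⟨hx, ?_, ?_⟩
  · simpa [add_smul, add_sub_right_comm] using hεx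
  · simpa [sub_smul, sub_sub_cancel] using hεx

theorem eventually_le_one_add_mul (hCopen : IsOpen C)
    (hCsmul : ∀ lam : ℝ, 0 < lam → ∀ x ∈ C, lam • x ∈ C) {δ : V → ℝ}
    (hscale : ∀ lam : ℝ, 0 < lam → ∀ x ∈ C, δ (lam • x) = lam⁻¹ * δ x)
    (hcomp : ∀ y ∈ C, (1 + ε) • x - y ∈ C → y - (1 - ε) • x ∈ C →
      x + ε • y ∈ C → δ (x + ε • y) ≤ δ x)
    (hε : 0 < ε) (hx : x ∈ C) :
    ∀ᶠ z in 𝓝 x, δ z ≤ (1 + ε) * δ x := by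
  set y : V → V := fun z => ε⁻¹ • ((1 + ε) • z - x)
  have hy : Tendsto y (𝓝 x) (𝓝 x) := by
    convert (show Continuous y by fun_prop).tendsto x using 2
    simp only [y, add_smul, one_smul, add_sub_cancel_left, inv_smul_smul₀ hε.ne']
  have hεz : 0 < 1 + ε := by linarith
  filter_upwards [hy.eventually_mem (setOf_comparable_mem_nhds hCopen hCsmul hε hx),
    hCopen.mem_nhds hx] with z ⟨hyC, hupper, hlower⟩ hz
  have hxy : x + ε • y z = (1 + ε) • z := by
    simp only [y, smul_inv_smul₀ hε.ne', add_sub_cancel]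
  have hle := hcomp (y z) hyC hupper hlower (hxy ▸ hCsmul _ hεz z hz)
  rw [hxy, hscale _ hεz z hz, inv_mul_le_iff₀ hεz] at hle
  exact hle

theorem eventually_one_sub_mul_le (hCopen : IsOpen C)
    (hCsmul : ∀ lam : ℝ, 0 < lam → ∀ x ∈ C, lam • x ∈ C) {δ : V → ℝ}
    (hscale : ∀ lam : ℝ, 0 < lam → ∀ x ∈ C, δ (lam • x) = lam⁻¹ * δ x)
    (hcomp : ∀ y ∈ C, (1 + ε) • x - y ∈ C → y - (1 - ε) • x ∈ C →
      x - ε • y ∈ C → δ x ≤ δ (x - ε • y))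
    (hε : 0 < ε) (hε1 : ε < 1) (hx : x ∈ C) :
    ∀ᶠ z in 𝓝 x, (1 - ε) * δ x ≤ δ z := by
  set y : V → V := fun z => ε⁻¹ • (x - (1 - ε) • z)
  have hy : Tendsto y (𝓝 x) (𝓝 x) := by
    convert (show Continuous y by fun_prop).tendsto x using 2
    simp only [y, sub_smul, one_smul, sub_sub_cancel, inv_smul_smul₀ hε.ne']
  have hεz : 0 < 1 - ε := by linarith
  filter_upwards [hy.eventually_mem (setOf_comparable_mem_nhds hCopen hCsmul hε hx),
    hCopen.mem_nhds hx] with z ⟨hyC, hupper, hlower⟩ hz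
  have hxy : x - ε • y z = (1 - ε) • z := by
    simp only [y, smul_inv_smul₀ hε.ne', sub_sub_cancel]
  have hle := hcomp (y z) hyC hupper hlower (hxy ▸ hCsmul _ hεz z hz)
  rw [hxy, hscale _ hεz z hz, le_inv_mul_iff₀ hεz] at hle
  exact hle

end Cone

theorem stmt2_general {V : Type*} [NormedAddCommGroup V] [NormedSpace ℝ V]
    (C : Set V) (hCopen : IsOpen C)
    (hCsmul : ∀ (lam : ℝ), 0 < lam → ∀ x ∈ C, lam • x ∈ C)
    (δ : V → ℝ)
    (hscale : ∀ (lam : ℝ), 0 < lam → ∀ x ∈ C, δ (lam • x) = lam⁻¹ * δ x)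
    (ε₀ : ℝ) (hε₀ : 0 < ε₀)
    (hcomp : ∀ ε : ℝ, 0 < ε → ε < ε₀ → ∀ x ∈ C, ∀ y ∈ C,
      (1 + ε) • x - y ∈ C → y - (1 - ε) • x ∈ C →
      (x + ε • y ∈ C → δ (x + ε • y) ≤ δ x) ∧
      (x - ε • y ∈ C → δ x ≤ δ (x - ε • y))) :
    ContinuousOn δ C := by
  intro x hx
  refine (continuousAt_of_eventually_abs_sub_le_mul (lt_min one_pos hε₀) ?_).continuousWithinAt
  rintro ε ⟨hε, hεmin⟩
  have hε1 : ε < 1 := hεmin.trans_le (min_le_left _ _)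
  have hcompε := hcomp ε hε (hεmin.trans_le (min_le_right _ _)) x hx
  filter_upwards [eventually_le_one_add_mul hCopen hCsmul hscale
      (fun y hy h₁ h₂ => (hcompε y hy h₁ h₂).1) hε hx,
    eventually_one_sub_mul_le hCopen hCsmul hscale
      (fun y hy h₁ h₂ => (hcompε y hy h₁ h₂).2) hε hε1 hx] with z hupper hlower
  have hεδ : ε * δ x ≤ ε * |δ x| := mul_le_mul_of_nonneg_left (le_abs_self _) hε.le
  have hεδ' : -(ε * δ x) ≤ ε * |δ x| := by
    rw [← mul_neg]; exact mul_le_mul_of_nonneg_left (neg_le_abs _) hε.le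
  rw [abs_sub_le_iff]
  constructor <;> linarith

/-- Dervan's strategy, abstractly: a positive function on an open convex cone satisfying
the scaling property and a weak comparison principle is continuous on the cone. -/
theorem stmt2 {V : Type*} [NormedAddCommGroup V] [NormedSpace ℝ V]
    [FiniteDimensional ℝ V]
    (C : Set V) (hCopen : IsOpen C)
    (hCsmul : ∀ (lam : ℝ), 0 < lam → ∀ x ∈ C, lam • x ∈ C)
    (hCadd : ∀ x ∈ C, ∀ y ∈ C, x + y ∈ C)
    (δ : V → ℝ) (hpos : ∀ x ∈ C, 0 < δ x)
    (hscale : ∀ (lam : ℝ), 0 < lam → ∀ x ∈ C, δ (lam • x) = lam⁻¹ * δ x)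
    (ε₀ : ℝ) (hε₀ : 0 < ε₀)
    (hcomp : ∀ ε : ℝ, 0 < ε → ε < ε₀ → ∀ x ∈ C, ∀ y ∈ C,
      (1 + ε) • x - y ∈ C → y - (1 - ε) • x ∈ C →
      (x + ε • y ∈ C → δ (x + ε • y) ≤ δ x) ∧
      (x - ε • y ∈ C → δ x ≤ δ (x - ε • y))) :
    ContinuousOn δ C :=
  stmt2_general C hCopen hCsmul δ hscale ε₀ hε₀ hcomp
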